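/- arXiv:1210.5493 — 4 statements merged into one kernel-verified Lean document; each statement's English description precedes it below -/
import Mathlib

section
/- Let A⁰ be an n×n real matrix that is asymptotically stable in the sense that there exist constants β₀, ρ₀ > 0 with ‖exp(tA⁰)‖ ≤ β₀ e^{−ρ₀ t} for all t ≥ 0. Let A : [0,∞) → ℝ^{n×n} be continuous and bounded with A(t) → A⁰ as t → ∞, and let Φ be the fundamental matrix of the time-varying system ẋ(t) = A(t)x(t). Then the time-varying system is exponentially stable: there exist constants ρ > 0 and 0 < β < ∞ such that ‖Φ(t,s)‖ ≤ β e^{−ρ(t−s)} for all 0 ≤ s ≤ t. -/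
/-!
Write `A(t) = A⁰ + (A(t) - A⁰)`. Variation of constants expresses `Φ(t,s)` through `exp((t-s)A⁰)`
and an integral of `exp((t-τ)A⁰)(A(τ) - A⁰)Φ(τ,s)`; by the stability of `A⁰` the function
`e^{ρ₀(τ-s)}‖Φ(τ,s)‖` satisfies a linear integral inequality with kernel `β₀‖A(τ) - A⁰‖`, and Gronwall
gives `‖Φ(t,s)‖ ≤ β₀ exp(-ρ₀(t-s) + β₀∫ₛᵗ‖A - A⁰‖)`. Since `‖A(τ) - A⁰‖ ≤ ρ₀/(2β₀)` after some time
`T` and is bounded before, the integral is at most `const + ρ₀(t-s)/(2β₀)`, leaving decay rate `ρ₀/2`.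
-/

open MeasureTheory Filter Set

theorem le_mul_exp_integral_of_le_add_integral {s t B : ℝ} (hst : s ≤ t) {ψ g : ℝ → ℝ}
    (hψ : ContinuousOn ψ (Icc s t)) (hg : ContinuousOn g (Icc s t))
    (hg_nonneg : ∀ τ ∈ Icc s t, 0 ≤ g τ)
    (h : ∀ τ ∈ Icc s t, ψ τ ≤ B + ∫ σ in s..τ, g σ * ψ σ) :
    ψ t ≤ B * Real.exp (∫ σ in s..t, g σ) := by
  set H : ℝ → ℝ := fun τ => B + ∫ σ in s..τ, g σ * ψ σ
  set G : ℝ → ℝ := fun τ => ∫ σ in s..τ, g σ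
  set F : ℝ → ℝ := fun τ => H τ * Real.exp (-G τ)
  have hgψ : ContinuousOn (fun σ => g σ * ψ σ) (Icc s t) := hg.mul hψ
  have hG : ContinuousOn G (Icc s t) := by
    rw [← uIcc_of_le hst] at hg ⊢
    exact intervalIntegral.continuousOn_primitive_interval (hg.integrableOn_compact isCompact_uIcc)
  have hH : ContinuousOn H (Icc s t) := by
    rw [← uIcc_of_le hst] at hgψ ⊢
    exact continuousOn_const.add
      (intervalIntegral.continuousOn_primitive_interval (hgψ.integrableOn_compact isCompact_uIcc))
  have hprimitive {f : ℝ → ℝ} (hf : ContinuousOn f (Icc s t)) {τ : ℝ} (hτ : τ ∈ Ioo s t) :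
      HasDerivAt (fun r => ∫ σ in s..r, f σ) (f τ) τ :=
    intervalIntegral.integral_hasDerivAt_right
      ((hf.mono (Icc_subset_Icc_right hτ.2.le)).intervalIntegrable_of_Icc hτ.1.le)
      ((hf.mono Ioo_subset_Icc_self).stronglyMeasurableAtFilter isOpen_Ioo τ hτ)
      (hf.continuousAt (Icc_mem_nhds hτ.1 hτ.2))
  have hF_deriv : ∀ τ ∈ Ioo s t,
      HasDerivAt F (g τ * (ψ τ - H τ) * Real.exp (-G τ)) τ := fun τ hτ =>
    (((hprimitive hgψ hτ).const_add B).mul (hprimitive hg hτ).neg.exp).congr_deriv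
      (by simp only [Pi.neg_apply, H, G]; ring)
  have hF_anti : AntitoneOn F (Icc s t) := by
    refine antitoneOn_of_deriv_nonpos (convex_Icc s t) (hH.mul (hG.neg.rexp)) ?_ ?_ <;>
      rw [interior_Icc]
    · exact fun τ hτ => (hF_deriv τ hτ).differentiableAt.differentiableWithinAt
    · intro τ hτ
      rw [(hF_deriv τ hτ).deriv]
      have hτ' := Ioo_subset_Icc_self hτ
      exact mul_nonpos_of_nonpos_of_nonneg
        (mul_nonpos_of_nonneg_of_nonpos (hg_nonneg τ hτ') (sub_nonpos.2 (h τ hτ'))) (by positivity)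
  have hFt : F t ≤ B := by
    simpa [F, H, G] using hF_anti (left_mem_Icc.2 hst) (right_mem_Icc.2 hst) hst
  calc ψ t ≤ H t := h t (right_mem_Icc.2 hst)
    _ = F t * Real.exp (G t) := by simp [F, mul_assoc, ← Real.exp_add]
    _ ≤ B * Real.exp (G t) := by gcongr

theorem integral_le_of_bounded_of_eventually_le {g : ℝ → ℝ} {s t T M ε : ℝ} (hs : 0 ≤ s)
    (hT : 0 ≤ T) (hst : s ≤ t) (hg : ContinuousOn g (Icc s t)) (hM : 0 ≤ M) (hε : 0 ≤ ε)
    (hgM : ∀ σ ∈ Icc s t, g σ ≤ M) (hgε : ∀ σ ∈ Icc s t, T ≤ σ → g σ ≤ ε) :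
    ∫ σ in s..t, g σ ≤ M * T + ε * (t - s) := by
  have hbound {a b c : ℝ} (hab : a ≤ b) (hsub : Icc a b ⊆ Icc s t) (h : ∀ σ ∈ Icc a b, g σ ≤ c) :
      ∫ σ in a..b, g σ ≤ c * (b - a) := by
    simpa [mul_comm] using intervalIntegral.integral_mono_on (μ := volume) hab
      ((hg.mono hsub).intervalIntegrable_of_Icc hab) intervalIntegrable_const h
  rcases le_total t T with htT | hTt
  · calc _ ≤ M * (t - s) := hbound hst subset_rfl hgM
      _ ≤ M * T + ε * (t - s) := by nlinarith
  · have hsT' : s ≤ max s T := le_max_left s T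
    have hT't : max s T ≤ t := max_le hst hTt
    rw [← intervalIntegral.integral_add_adjacent_intervals
      ((hg.mono (Icc_subset_Icc_right hT't)).intervalIntegrable_of_Icc hsT')
      ((hg.mono (Icc_subset_Icc_left hsT')).intervalIntegrable_of_Icc hT't)]
    have h₁ := hbound hsT' (Icc_subset_Icc_right hT't) fun σ hσ => hgM σ ⟨hσ.1, hσ.2.trans hT't⟩
    have h₂ := hbound hT't (Icc_subset_Icc_left hsT') fun σ hσ =>
      hgε σ ⟨hsT'.trans hσ.1, hσ.2⟩ ((le_max_right s T).trans hσ.1)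
    have : max s T - s ≤ T := sub_le_iff_le_add.2 (max_le (by linarith) (by linarith))
    nlinarith

section BanachAlgebra

variable {𝔸 : Type*} [NormedRing 𝔸] [NormedAlgebra ℝ 𝔸] [CompleteSpace 𝔸]
  {A0 : 𝔸} {A X : ℝ → 𝔸} {s t : ℝ}

theorem eq_exp_smul_mul_add_integral_of_hasDerivAt (hst : s ≤ t) (hA : ContinuousOn A (Icc s t))
    (hX : ∀ τ ∈ Icc s t, HasDerivAt X (A τ * X τ) τ) :
    X t = NormedSpace.exp ((t - s) • A0) * X s +
      ∫ τ in s..t, NormedSpace.exp ((t - τ) • A0) * ((A τ - A0) * X τ) := by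
  set E : ℝ → 𝔸 := fun τ => NormedSpace.exp ((t - τ) • A0)
  have hE : ∀ τ, HasDerivAt E (-(E τ * A0)) τ := fun τ => by
    have := (hasDerivAt_exp_smul_const A0 (t - τ)).scomp τ ((hasDerivAt_id τ).const_sub t)
    rwa [neg_one_smul] at this
  have hEX : ∀ τ ∈ uIcc s t, HasDerivAt (fun τ => E τ * X τ) (E τ * ((A τ - A0) * X τ)) τ := by
    intro τ hτ
    rw [uIcc_of_le hst] at hτ
    exact ((hE τ).mul (hX τ hτ)).congr_deriv (by noncomm_ring)
  have hint : IntervalIntegrable (fun τ => E τ * ((A τ - A0) * X τ)) volume s t := by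
    refine ContinuousOn.intervalIntegrable_of_Icc hst ?_
    exact (continuous_iff_continuousAt.2 fun τ => (hE τ).continuousAt).continuousOn.mul
      ((hA.sub continuousOn_const).mul fun τ hτ => (hX τ hτ).continuousAt.continuousWithinAt)
  rw [intervalIntegral.integral_eq_sub_of_hasDerivAt hEX hint]
  simp [E]

theorem exp_mul_norm_le_add_integral {β0 ρ0 : ℝ}
    (hstab : ∀ t : ℝ, 0 ≤ t → ‖NormedSpace.exp (t • A0)‖ ≤ β0 * Real.exp (-ρ0 * t))
    (hst : s ≤ t) (hA : ContinuousOn A (Icc s t)) (hX : ∀ τ ∈ Icc s t, HasDerivAt X (A τ * X τ) τ) :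
    Real.exp (ρ0 * (t - s)) * ‖X t‖ ≤ β0 * ‖X s‖ +
      ∫ σ in s..t, β0 * ‖A σ - A0‖ * (Real.exp (ρ0 * (σ - s)) * ‖X σ‖) := by
  have hXc : ContinuousOn X (Icc s t) := fun τ hτ => (hX τ hτ).continuousAt.continuousWithinAt
  have hint : IntervalIntegrable
      (fun σ => β0 * ‖A σ - A0‖ * (Real.exp (ρ0 * (σ - s)) * ‖X σ‖)) volume s t :=
    ContinuousOn.intervalIntegrable_of_Icc hst <| (continuousOn_const.mul
      (hA.sub continuousOn_const).norm).mul ((by fun_prop : Continuous _).continuousOn.mul hXc.norm)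
  have hX_le : ‖X t‖ ≤ Real.exp (-(ρ0 * (t - s))) * (β0 * ‖X s‖ +
      ∫ σ in s..t, β0 * ‖A σ - A0‖ * (Real.exp (ρ0 * (σ - s)) * ‖X σ‖)) := by
    rw [eq_exp_smul_mul_add_integral_of_hasDerivAt (A0 := A0) hst hA hX, mul_add,
      ← intervalIntegral.integral_const_mul]
    refine (norm_add_le _ _).trans (add_le_add ?_ ?_)
    · calc _ ≤ ‖NormedSpace.exp ((t - s) • A0)‖ * ‖X s‖ := norm_mul_le _ _
        _ ≤ β0 * Real.exp (-ρ0 * (t - s)) * ‖X s‖ := by gcongr; exact hstab _ (sub_nonneg.2 hst)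
        _ = _ := by rw [neg_mul]; ring
    · refine intervalIntegral.norm_integral_le_of_norm_le hst
        (ae_of_all _ fun σ hσ => ?_) (hint.const_mul _)
      calc _ ≤ ‖NormedSpace.exp ((t - σ) • A0)‖ * (‖A σ - A0‖ * ‖X σ‖) :=
            (norm_mul_le _ _).trans (by gcongr; exact norm_mul_le _ _)
        _ ≤ β0 * Real.exp (-ρ0 * (t - σ)) * (‖A σ - A0‖ * ‖X σ‖) := by
            gcongr; exact hstab _ (sub_nonneg.2 hσ.2)
        _ = _ := by
            rw [show -ρ0 * (t - σ) = -(ρ0 * (t - s)) + ρ0 * (σ - s) by ring, Real.exp_add]; ring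
  calc _ ≤ Real.exp (ρ0 * (t - s)) * (Real.exp (-(ρ0 * (t - s))) * (β0 * ‖X s‖ +
        ∫ σ in s..t, β0 * ‖A σ - A0‖ * (Real.exp (ρ0 * (σ - s)) * ‖X σ‖))) := by gcongr
    _ = _ := by rw [← mul_assoc, ← Real.exp_add, add_neg_cancel, Real.exp_zero, one_mul]

theorem norm_le_mul_exp_add_integral {β0 ρ0 : ℝ}
    (hstab : ∀ t : ℝ, 0 ≤ t → ‖NormedSpace.exp (t • A0)‖ ≤ β0 * Real.exp (-ρ0 * t))
    (hst : s ≤ t) (hA : ContinuousOn A (Icc s t)) (hX : ∀ τ ∈ Icc s t, HasDerivAt X (A τ * X τ) τ) :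
    ‖X t‖ ≤ β0 * ‖X s‖ * Real.exp (-ρ0 * (t - s) + β0 * ∫ σ in s..t, ‖A σ - A0‖) := by
  have hβ0 : 0 ≤ β0 := by simpa using (norm_nonneg _).trans (hstab 0 le_rfl)
  have hXc : ContinuousOn X (Icc s t) := fun τ hτ => (hX τ hτ).continuousAt.continuousWithinAt
  have hgronwall := le_mul_exp_integral_of_le_add_integral hst
    (ψ := fun τ => Real.exp (ρ0 * (τ - s)) * ‖X τ‖) (g := fun σ => β0 * ‖A σ - A0‖)
    ((by fun_prop : Continuous fun τ => Real.exp (ρ0 * (τ - s))).continuousOn.mul hXc.norm)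
    (continuousOn_const.mul (hA.sub continuousOn_const).norm) (fun σ _ => by positivity)
    fun τ hτ => exp_mul_norm_le_add_integral hstab hτ.1 (hA.mono (Icc_subset_Icc_right hτ.2))
      fun σ hσ => hX σ ⟨hσ.1, hσ.2.trans hτ.2⟩
  rw [intervalIntegral.integral_const_mul] at hgronwall
  calc ‖X t‖ = Real.exp (-ρ0 * (t - s)) * (Real.exp (ρ0 * (t - s)) * ‖X t‖) := by
        rw [← mul_assoc, ← Real.exp_add, neg_mul, neg_add_cancel, Real.exp_zero, one_mul]
    _ ≤ Real.exp (-ρ0 * (t - s)) * (β0 * ‖X s‖ * Real.exp (β0 * ∫ σ in s..t, ‖A σ - A0‖)) := by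
        gcongr
    _ = _ := by rw [Real.exp_add]; ring

end BanachAlgebra

/-- If `A⁰` is exponentially (asymptotically) stable and the bounded continuous
time-varying matrix `A(t)` converges to `A⁰` as `t → ∞`, then the fundamental
matrix `Φ(t,s)` of `ẋ = A(t) x` is exponentially stable:
`‖Φ(t,s)‖ ≤ β e^{-ρ (t - s)}` for all `0 ≤ s ≤ t`. -/
theorem stmt_0 {n : ℕ}
    (A0 : EuclideanSpace ℝ (Fin n) →L[ℝ] EuclideanSpace ℝ (Fin n))
    (β0 ρ0 : ℝ) (hβ0 : 0 < β0) (hρ0 : 0 < ρ0)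
    (hstab : ∀ t : ℝ, 0 ≤ t → ‖NormedSpace.exp (t • A0)‖ ≤ β0 * Real.exp (-ρ0 * t))
    (A : ℝ → (EuclideanSpace ℝ (Fin n) →L[ℝ] EuclideanSpace ℝ (Fin n)))
    (hAcont : ContinuousOn A (Set.Ici (0 : ℝ)))
    (hAbdd : ∃ C : ℝ, ∀ t : ℝ, 0 ≤ t → ‖A t‖ ≤ C)
    (hAconv : Tendsto A atTop (nhds A0))
    (Φ : ℝ → ℝ → (EuclideanSpace ℝ (Fin n) →L[ℝ] EuclideanSpace ℝ (Fin n)))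
    (hΦinit : ∀ s : ℝ, 0 ≤ s → Φ s s = 1)
    (hΦderiv : ∀ s : ℝ, 0 ≤ s → ∀ t : ℝ, s ≤ t →
      HasDerivAt (fun τ => Φ τ s) ((A t).comp (Φ t s)) t) :
    ∃ ρ : ℝ, 0 < ρ ∧ ∃ β : ℝ, 0 < β ∧
      ∀ s t : ℝ, 0 ≤ s → s ≤ t → ‖Φ t s‖ ≤ β * Real.exp (-ρ * (t - s)) := by
  obtain ⟨C, hC⟩ := hAbdd
  set ε := ρ0 / (2 * β0)
  have hβε : β0 * ε = ρ0 / 2 := by simp only [ε]; field_simp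
  obtain ⟨T, hT⟩ := Metric.tendsto_atTop.1 hAconv ε (by positivity)
  set M := C + ‖A0‖
  have hM : ∀ τ, 0 ≤ τ → ‖A τ - A0‖ ≤ M := fun τ hτ =>
    (norm_sub_le _ _).trans (add_le_add_left (hC τ hτ) _)
  refine ⟨ρ0 / 2, by positivity, β0 * Real.exp (β0 * (M * max T 0)), by positivity,
    fun s t hs hst => ?_⟩
  have hAcont' : ContinuousOn A (Icc s t) := hAcont.mono fun τ hτ => hs.trans hτ.1
  have hΦ := norm_le_mul_exp_add_integral hstab hst hAcont' fun τ hτ => hΦderiv s hs τ hτ.1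
  have hint := integral_le_of_bounded_of_eventually_le (g := fun σ => ‖A σ - A0‖) hs
    (le_max_right T 0) hst (hAcont'.sub continuousOn_const).norm ((norm_nonneg _).trans (hM 0 le_rfl)) (by positivity)
    (fun σ hσ => hM σ (hs.trans hσ.1))
    fun σ _ hσ => (dist_eq_norm (A σ) A0 ▸ hT σ ((le_max_left T 0).trans hσ)).le
  rw [hΦinit s hs] at hΦ
  calc ‖Φ t s‖ ≤ β0 * 1 * Real.exp (-ρ0 * (t - s) + β0 * (M * max T 0 + ε * (t - s))) := by
        refine hΦ.trans ?_
        gcongr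
        exact ContinuousLinearMap.norm_id_le
    _ = _ := by
        rw [mul_one, mul_assoc, ← Real.exp_add]
        congr 2
        linear_combination (t - s) * hβε
end

section
/- Let A⁰ be an n×n real matrix that is asymptotically stable in the sense that there exist constants β₀, ρ₀ > 0 with ‖exp(tA⁰)‖ ≤ β₀ e^{−ρ₀ t} for all t ≥ 0. Let A : [0,∞) → ℝ^{n×n} be continuous and bounded with A(t) → A⁰ as t → ∞, let Φ be the fundamental matrix of ẋ(t) = A(t)x(t), and fix t₀ ≥ 0. Then lim_{T→∞} (1/T) ∫_{t₀}^{T} ‖Φ(t,t₀) − exp((t−t₀)A⁰)‖² dt = 0. -/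
open MeasureTheory Filter Set Topology

/-!
Let `X(t) = Φ(t, t₀)` and choose `s` with `‖A(τ) - A⁰‖ ≤ δ := ρ₀ / (2β₀)` for `τ ≥ s`. Variation
of constants around `A⁰` gives `X(t) = e^{(t-s)A⁰} X(s) + ∫ₛᵗ e^{(t-τ)A⁰} (A(τ) - A⁰) X(τ) dτ`, so
`u(τ) = e^{ρ₀(τ-s)} ‖X(τ)‖` satisfies `u(t) ≤ β₀ ‖X(s)‖ + β₀ δ ∫ₛᵗ u`, and Grönwall yields
`‖X(t)‖ ≤ β₀ ‖X(s)‖ e^{-ρ₀(t-s)/2}`. Both `Φ(t, t₀)` and `e^{(t-t₀)A⁰}` thus tend to `0`, hence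
so does the integrand, and a function tending to `0` has Cesàro means tending to `0`.
-/

theorem le_mul_exp_of_le_add_mul_intervalIntegral {u : ℝ → ℝ} {a c K : ℝ}
    (hu : ContinuousOn u (Ici a)) (hK : 0 ≤ K)
    (h : ∀ t ≥ a, u t ≤ c + K * ∫ τ in a..t, u τ) :
    ∀ t ≥ a, u t ≤ c * Real.exp (K * (t - a)) := by
  intro b hb
  set V : ℝ → ℝ := fun t => c + K * ∫ τ in a..t, u τ
  have hint : ∀ t ≥ a, IntervalIntegrable u volume a t := fun t ht =>
    (hu.mono (by simp [uIcc_of_le ht, Icc_subset_Ici_self])).intervalIntegrable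
  have hV : ∀ t ≥ a, HasDerivWithinAt V (K * u t) (Ici t) t := fun t ht =>
    have hsub : Ioi t ⊆ Ici a := fun x hx => ht.trans (le_of_lt hx)
    ((intervalIntegral.integral_hasDerivWithinAt_right (hint t ht)
      ((hu.mono hsub).stronglyMeasurableAtFilter_nhdsWithin measurableSet_Ioi t)
      ((hu t ht).mono hsub)).const_mul K).const_add c
  have hVc : ContinuousOn V (Icc a b) := by
    have := intervalIntegral.continuousOn_primitive_interval' (hint b hb) left_mem_uIcc
    rw [uIcc_of_le hb] at this
    exact continuousOn_const.add (this.const_smul K)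
  have hVb := le_gronwallBound_of_liminf_deriv_right_le (δ := c) (ε := 0) hVc
    (fun t ht _ hr => (hV t ht.1).liminf_right_slope_le hr) (by simp [V])
    (fun t ht => by simpa using mul_le_mul_of_nonneg_left (h t ht.1) hK) b ⟨hb, le_rfl⟩
  rw [gronwallBound_ε0] at hVb
  exact (h b hb).trans hVb

theorem intervalIntegral_isLittleO_id_of_tendsto_zero {E : Type*} [NormedAddCommGroup E]
    [NormedSpace ℝ E] {f : ℝ → E} {a : ℝ} (hf : ContinuousOn f (Ici a))
    (hlim : Tendsto f atTop (𝓝 0)) :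
    (fun T => ∫ t in a..T, f t) =o[atTop] id := by
  refine Asymptotics.isLittleO_iff.2 fun c hc => ?_
  obtain ⟨t₁, ht₁⟩ := eventually_atTop.1
    (hlim.eventually (Metric.closedBall_mem_nhds 0 (half_pos hc)))
  set s := max t₁ a
  set M := ‖∫ t in a..s, f t‖
  have has : a ≤ s := le_max_right _ _
  have hint : ∀ t ≥ a, IntervalIntegrable f volume a t := fun t ht =>
    (hf.mono (by simp [uIcc_of_le ht, Icc_subset_Ici_self])).intervalIntegrable
  filter_upwards [eventually_ge_atTop s, eventually_ge_atTop (2 * M / c + |s|)] with T hTs hTM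
  have htail : ‖∫ t in s..T, f t‖ ≤ c / 2 * |T - s| :=
    intervalIntegral.norm_integral_le_of_norm_le_const fun t ht => by
      rw [uIoc_of_le hTs] at ht
      simpa using ht₁ t ((le_max_left _ _).trans ht.1.le)
  rw [← intervalIntegral.integral_add_adjacent_intervals (hint s has)
    ((hint s has).symm.trans (hint T (has.trans hTs)))]
  calc ‖(∫ t in a..s, f t) + ∫ t in s..T, f t‖ ≤ M + c / 2 * |T - s| :=
        (norm_add_le _ _).trans (add_le_add_right htail _)
    _ ≤ c * ‖id T‖ := by
        rw [abs_of_nonneg (sub_nonneg.2 hTs), id, Real.norm_eq_abs,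
          abs_of_nonneg ((abs_nonneg s).trans (le_add_of_nonneg_left (by positivity) |>.trans hTM))]
        nlinarith [neg_abs_le s, div_mul_cancel₀ (2 * M) hc.ne']

variable {𝔸 : Type*} [NormedRing 𝔸] [NormedAlgebra ℝ 𝔸] [CompleteSpace 𝔸]

theorem hasDerivAt_exp_smul_sub_mul {X : ℝ → 𝔸} {A₀ X' : 𝔸} {b τ : ℝ}
    (hX : HasDerivAt X X' τ) :
    HasDerivAt (fun s => NormedSpace.exp ((b - s) • A₀) * X s)
      (NormedSpace.exp ((b - τ) • A₀) * (X' - A₀ * X τ)) τ := by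
  have hexp : HasDerivAt (fun s => NormedSpace.exp ((b - s) • A₀))
      (-(NormedSpace.exp ((b - τ) • A₀) * A₀)) τ := by
    simpa [Function.comp_def] using (hasDerivAt_exp_smul_const (𝕂 := ℝ) A₀ (b - τ)).scomp τ
      ((hasDerivAt_id τ).const_sub b)
  refine (hexp.mul hX).congr_deriv ?_
  rw [neg_mul, mul_sub, ← mul_assoc]
  abel

theorem sub_exp_smul_mul_eq_intervalIntegral {X B : ℝ → 𝔸} {A₀ : 𝔸} {a b : ℝ} (hab : a ≤ b)
    (hX : ∀ t ∈ Icc a b, HasDerivAt X (B t * X t) t) (hB : ContinuousOn B (Icc a b)) :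
    X b - NormedSpace.exp ((b - a) • A₀) * X a =
      ∫ τ in a..b, NormedSpace.exp ((b - τ) • A₀) * ((B τ - A₀) * X τ) := by
  have hXc : ContinuousOn X (Icc a b) := fun t ht => (hX t ht).continuousAt.continuousWithinAt
  have hexpc : Continuous fun τ : ℝ => NormedSpace.exp ((b - τ) • A₀) :=
    (differentiable_exp_smul_const ℝ A₀).continuous.comp (continuous_sub_left b)
  rw [← uIcc_of_le hab] at hX hB hXc
  have hint : IntervalIntegrable
      (fun τ => NormedSpace.exp ((b - τ) • A₀) * ((B τ - A₀) * X τ)) volume a b :=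
    (hexpc.continuousOn.mul ((hB.sub continuousOn_const).mul hXc)).intervalIntegrable
  have := intervalIntegral.integral_eq_sub_of_hasDerivAt
    (fun τ hτ => (hasDerivAt_exp_smul_sub_mul (b := b) (A₀ := A₀) (hX τ hτ)).congr_deriv
      (by rw [sub_mul])) hint
  simpa using this.symm

theorem exp_mul_norm_le_add_mul_intervalIntegral {X B : ℝ → 𝔸} {A₀ : 𝔸} {β ρ δ a b : ℝ}
    (hab : a ≤ b) (hstab : ∀ t ≥ 0, ‖NormedSpace.exp (t • A₀)‖ ≤ β * Real.exp (-ρ * t))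
    (hX : ∀ t ∈ Icc a b, HasDerivAt X (B t * X t) t) (hB : ContinuousOn B (Icc a b))
    (hBA : ∀ t ∈ Icc a b, ‖B t - A₀‖ ≤ δ) :
    Real.exp (ρ * (b - a)) * ‖X b‖ ≤
      β * ‖X a‖ + β * δ * ∫ τ in a..b, Real.exp (ρ * (τ - a)) * ‖X τ‖ := by
  set I := ∫ τ in a..b, Real.exp (ρ * (τ - a)) * ‖X τ‖
  have hXc : ContinuousOn X (Icc a b) := fun t ht => (hX t ht).continuousAt.continuousWithinAt
  have hu : IntervalIntegrable (fun τ => Real.exp (ρ * (τ - a)) * ‖X τ‖) volume a b :=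
    ((by fun_prop : Continuous fun τ => Real.exp (ρ * (τ - a))).continuousOn.mul
      hXc.norm).intervalIntegrable_of_Icc hab
  have hinit : ‖NormedSpace.exp ((b - a) • A₀) * X a‖ ≤ Real.exp (-ρ * (b - a)) * (β * ‖X a‖) :=
    calc _ ≤ ‖NormedSpace.exp ((b - a) • A₀)‖ * ‖X a‖ := norm_mul_le _ _
      _ ≤ β * Real.exp (-ρ * (b - a)) * ‖X a‖ := by gcongr; exact hstab _ (sub_nonneg.2 hab)
      _ = _ := by ring
  have hduhamel : ‖∫ τ in a..b, NormedSpace.exp ((b - τ) • A₀) * ((B τ - A₀) * X τ)‖ ≤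
      Real.exp (-ρ * (b - a)) * (β * δ * I) := by
    rw [← intervalIntegral.integral_const_mul, ← intervalIntegral.integral_const_mul]
    refine intervalIntegral.norm_integral_le_of_norm_le hab (ae_of_all _ fun τ hτ => ?_)
      ((hu.const_mul _).const_mul _)
    have hτ' : τ ∈ Icc a b := Ioc_subset_Icc_self hτ
    have hexp : Real.exp (-ρ * (b - τ)) = Real.exp (-ρ * (b - a)) * Real.exp (ρ * (τ - a)) := by
      rw [← Real.exp_add]; ring_nf
    calc _ ≤ ‖NormedSpace.exp ((b - τ) • A₀)‖ * (‖B τ - A₀‖ * ‖X τ‖) :=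
          (norm_mul_le _ _).trans (by gcongr; exact norm_mul_le _ _)
      _ ≤ β * Real.exp (-ρ * (b - τ)) * (δ * ‖X τ‖) := by
          gcongr
          · exact (norm_nonneg _).trans (hstab _ (sub_nonneg.2 hτ'.2))
          · exact hstab _ (sub_nonneg.2 hτ'.2)
          · exact hBA τ hτ'
      _ = _ := by rw [hexp]; ring
  have hXb : ‖X b‖ ≤ Real.exp (-ρ * (b - a)) * (β * ‖X a‖ + β * δ * I) := by
    rw [sub_eq_iff_eq_add.1 (sub_exp_smul_mul_eq_intervalIntegral (A₀ := A₀) hab hX hB),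
      mul_add]
    exact (norm_add_le _ _).trans (add_le_add hduhamel hinit |>.trans_eq (add_comm _ _))
  calc _ ≤ Real.exp (ρ * (b - a)) * (Real.exp (-ρ * (b - a)) * (β * ‖X a‖ + β * δ * I)) := by
        gcongr
    _ = β * ‖X a‖ + β * δ * I := by rw [← mul_assoc, ← Real.exp_add]; ring_nf; simp

theorem norm_le_mul_exp_of_hasDerivAt_of_norm_sub_le {X B : ℝ → 𝔸} {A₀ : 𝔸} {β ρ δ a : ℝ}
    (hβ : 0 ≤ β) (hδ : 0 ≤ δ)
    (hstab : ∀ t ≥ 0, ‖NormedSpace.exp (t • A₀)‖ ≤ β * Real.exp (-ρ * t))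
    (hX : ∀ t ≥ a, HasDerivAt X (B t * X t) t) (hB : ContinuousOn B (Ici a))
    (hBA : ∀ t ≥ a, ‖B t - A₀‖ ≤ δ) :
    ∀ t ≥ a, ‖X t‖ ≤ β * ‖X a‖ * Real.exp (-(ρ - β * δ) * (t - a)) := by
  have hu : ContinuousOn (fun τ => Real.exp (ρ * (τ - a)) * ‖X τ‖) (Ici a) :=
    (by fun_prop : Continuous fun τ => Real.exp (ρ * (τ - a))).continuousOn.mul
      fun t ht => (hX t ht).continuousAt.continuousWithinAt.norm
  have hgronwall := le_mul_exp_of_le_add_mul_intervalIntegral hu (mul_nonneg hβ hδ)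
    fun t ht => exp_mul_norm_le_add_mul_intervalIntegral ht hstab (fun τ hτ => hX τ hτ.1)
      (hB.mono Icc_subset_Ici_self) (fun τ hτ => hBA τ hτ.1)
  intro t ht
  calc ‖X t‖ = Real.exp (-ρ * (t - a)) * (Real.exp (ρ * (t - a)) * ‖X t‖) := by
        rw [← mul_assoc, ← Real.exp_add]; ring_nf; simp
    _ ≤ Real.exp (-ρ * (t - a)) * (β * ‖X a‖ * Real.exp (β * δ * (t - a))) :=
        mul_le_mul_of_nonneg_left (hgronwall t ht) (Real.exp_pos _).le
    _ = β * ‖X a‖ * Real.exp (-(ρ - β * δ) * (t - a)) := by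
        rw [mul_left_comm, ← Real.exp_add]; ring_nf

theorem tendsto_const_mul_exp_neg_mul_sub {κ : ℝ} (hκ : 0 < κ) (C a : ℝ) :
    Tendsto (fun t => C * Real.exp (-κ * (t - a))) atTop (𝓝 0) := by
  have hlin : Tendsto (fun t => κ * (t - a)) atTop atTop :=
    (tendsto_atTop_add_const_right _ (-a) tendsto_id).const_mul_atTop hκ
  simpa [neg_mul] using (Real.tendsto_exp_neg_atTop_nhds_zero.comp hlin).const_mul C

theorem tendsto_zero_of_hasDerivAt_of_tendsto_of_stable {X B : ℝ → 𝔸} {A₀ : 𝔸} {β ρ a : ℝ}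
    (hβ : 0 < β) (hρ : 0 < ρ)
    (hstab : ∀ t ≥ 0, ‖NormedSpace.exp (t • A₀)‖ ≤ β * Real.exp (-ρ * t))
    (hX : ∀ t ≥ a, HasDerivAt X (B t * X t) t) (hB : ContinuousOn B (Ici a))
    (hBlim : Tendsto B atTop (𝓝 A₀)) :
    Tendsto X atTop (𝓝 0) := by
  set δ := ρ / (2 * β)
  obtain ⟨t₁, ht₁⟩ := eventually_atTop.1
    (hBlim.eventually (Metric.closedBall_mem_nhds A₀ (by positivity : 0 < δ)))
  set s := max t₁ a
  have has : a ≤ s := le_max_right _ _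
  have hdecay := norm_le_mul_exp_of_hasDerivAt_of_norm_sub_le (δ := δ) hβ.le (by positivity) hstab
    (fun t ht => hX t (has.trans ht)) (hB.mono (Ici_subset_Ici.2 has))
    (fun t ht => by simpa [dist_eq_norm] using ht₁ t ((le_max_left _ _).trans ht))
  have hκ : ρ - β * δ = ρ / 2 := by simp only [δ]; field_simp; ring
  refine squeeze_zero_norm' (eventually_ge_atTop s |>.mono hdecay) ?_
  rw [hκ]
  exact tendsto_const_mul_exp_neg_mul_sub (half_pos hρ) _ _

theorem stmt_1_general {n : ℕ}
    (A0 : EuclideanSpace ℝ (Fin n) →L[ℝ] EuclideanSpace ℝ (Fin n))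
    (β0 ρ0 : ℝ) (hβ0 : 0 < β0) (hρ0 : 0 < ρ0)
    (hstab : ∀ t : ℝ, 0 ≤ t → ‖NormedSpace.exp (t • A0)‖ ≤ β0 * Real.exp (-ρ0 * t))
    (A : ℝ → (EuclideanSpace ℝ (Fin n) →L[ℝ] EuclideanSpace ℝ (Fin n)))
    (hAcont : ContinuousOn A (Set.Ici (0 : ℝ)))
    (hAconv : Tendsto A atTop (nhds A0))
    (Φ : ℝ → ℝ → (EuclideanSpace ℝ (Fin n) →L[ℝ] EuclideanSpace ℝ (Fin n)))
    (hΦderiv : ∀ s : ℝ, 0 ≤ s → ∀ t : ℝ, s ≤ t →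
      HasDerivAt (fun τ => Φ τ s) ((A t).comp (Φ t s)) t)
    (t₀ : ℝ) (ht₀ : 0 ≤ t₀) :
    Tendsto (fun T : ℝ =>
        (1 / T) * ∫ t in t₀..T, ‖Φ t t₀ - NormedSpace.exp ((t - t₀) • A0)‖ ^ 2)
      atTop (nhds 0) := by
  have hΦ : ∀ t ≥ t₀, HasDerivAt (fun τ => Φ τ t₀) (A t * Φ t t₀) t := hΦderiv t₀ ht₀
  have hΦlim : Tendsto (fun t => Φ t t₀) atTop (𝓝 0) :=
    tendsto_zero_of_hasDerivAt_of_tendsto_of_stable hβ0 hρ0 hstab hΦ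
      (hAcont.mono (Ici_subset_Ici.2 ht₀)) hAconv
  have hexplim : Tendsto (fun t => NormedSpace.exp ((t - t₀) • A0)) atTop (𝓝 0) :=
    squeeze_zero_norm' ((eventually_ge_atTop t₀).mono fun t ht => hstab _ (sub_nonneg.2 ht))
      (tendsto_const_mul_exp_neg_mul_sub hρ0 β0 t₀)
  have hcont : ContinuousOn (fun t => ‖Φ t t₀ - NormedSpace.exp ((t - t₀) • A0)‖ ^ 2) (Ici t₀) :=
    fun t ht => (((hΦ t ht).continuousAt.sub ((differentiable_exp_smul_const ℝ A0).continuous.comp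
      (continuous_sub_right t₀)).continuousAt).norm.pow 2).continuousWithinAt
  have hlim : Tendsto (fun t => ‖Φ t t₀ - NormedSpace.exp ((t - t₀) • A0)‖ ^ 2) atTop (𝓝 0) := by
    simpa using (hΦlim.sub hexplim).norm.pow 2
  simpa only [one_div, smul_eq_mul, id] using
    (intervalIntegral_isLittleO_id_of_tendsto_zero hcont hlim).tendsto_inv_smul_nhds_zero

/-- If `A⁰` is exponentially stable and the bounded continuous time-varying
matrix `A(t)` converges to `A⁰` as `t → ∞`, and `Φ` is the fundamental matrix
of `ẋ = A(t) x`, then for any `t₀ ≥ 0`,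
`(1/T) ∫_{t₀}^T ‖Φ(t,t₀) − exp((t−t₀)A⁰)‖² dt → 0` as `T → ∞`. -/
theorem stmt_1 {n : ℕ}
    (A0 : EuclideanSpace ℝ (Fin n) →L[ℝ] EuclideanSpace ℝ (Fin n))
    (β0 ρ0 : ℝ) (hβ0 : 0 < β0) (hρ0 : 0 < ρ0)
    (hstab : ∀ t : ℝ, 0 ≤ t → ‖NormedSpace.exp (t • A0)‖ ≤ β0 * Real.exp (-ρ0 * t))
    (A : ℝ → (EuclideanSpace ℝ (Fin n) →L[ℝ] EuclideanSpace ℝ (Fin n)))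
    (hAcont : ContinuousOn A (Set.Ici (0 : ℝ)))
    (hAbdd : ∃ C : ℝ, ∀ t : ℝ, 0 ≤ t → ‖A t‖ ≤ C)
    (hAconv : Tendsto A atTop (nhds A0))
    (Φ : ℝ → ℝ → (EuclideanSpace ℝ (Fin n) →L[ℝ] EuclideanSpace ℝ (Fin n)))
    (hΦinit : ∀ s : ℝ, 0 ≤ s → Φ s s = 1)
    (hΦderiv : ∀ s : ℝ, 0 ≤ s → ∀ t : ℝ, s ≤ t →
      HasDerivAt (fun τ => Φ τ s) ((A t).comp (Φ t s)) t)
    (t₀ : ℝ) (ht₀ : 0 ≤ t₀) :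
    Tendsto (fun T : ℝ =>
        (1 / T) * ∫ t in t₀..T, ‖Φ t t₀ - NormedSpace.exp ((t - t₀) • A0)‖ ^ 2)
      atTop (nhds 0) :=
  stmt_1_general A0 β0 ρ0 hβ0 hρ0 hstab A hAcont hAconv Φ hΦderiv t₀ ht₀
end

section
/- Let f be a parametrized family of densities on Θ with parameter sets P ⊆ P̃ (as in the context), satisfying the identifiability condition: for all ζ, ζ', ζ⁰ ∈ P, ∫_Θ log f(ζ,θ) f(ζ⁰,θ) dθ = ∫_Θ log f(ζ',θ) f(ζ⁰,θ) dθ if and only if ζ = ζ'. Fix ζ⁰ ∈ P and let (θ_j)_{j≥1} be independent identically distributed Θ-valued random variables with common density f(ζ⁰,·) with respect to Lebesgue measure on Θ. For each N, let ζ̂_N be any maximum likelihood estimate, i.e., any P-valued random variable minimizing the scaled negative log-likelihood ζ ↦ −(1/N) Σ_{j=1}^{N} log f(ζ,θ_j) over ζ ∈ P. Then ζ̂_N → ζ⁰ almost surely as N → ∞ (strong consistency of the MLE). -/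
/-!
Wald's argument. Joint continuity of `log f` on the compact set `P × Θ` makes the functions
`ζ ↦ log f(ζ,θ)`, `θ ∈ Θ`, equicontinuous on `P`, so the strong law of large numbers on a countable
dense subset of `P` upgrades to almost sure uniform convergence on `P` of the average
log-likelihood to `ζ ↦ ∫_Θ log f(ζ,θ) f(ζ⁰,θ) dθ`. By Gibbs' inequality and identifiability this
limit has `ζ⁰` as its unique maximizer on `P`, and maximizers of functions converging uniformly to
a continuous function with a unique maximizer on a compact set converge to that maximizer.
-/

open MeasureTheory Filter Topology Finset

theorem abs_inv_mul_sum_range_le {c : ℕ → ℝ} {C : ℝ} (hC : 0 ≤ C) {N : ℕ}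
    (h : ∀ j < N, |c j| ≤ C) : |(N : ℝ)⁻¹ * ∑ j ∈ range N, c j| ≤ C := by
  rcases N.eq_zero_or_pos with rfl | hN
  · simpa using hC
  have hN' : (0 : ℝ) < N := Nat.cast_pos.2 hN
  rw [abs_mul, abs_inv, Nat.abs_cast, inv_mul_le_iff₀ hN']
  calc |∑ j ∈ range N, c j| ≤ ∑ j ∈ range N, |c j| := abs_sum_le_sum_abs _ _
    _ ≤ ∑ _j ∈ range N, C := sum_le_sum fun j hj => h j (mem_range.1 hj)
    _ = N * C := by simp

theorem EquicontinuousOn.average {ι X : Type*} [TopologicalSpace X] {F : ι → X → ℝ} {S : Set X}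
    (hF : EquicontinuousOn F S) (u : ℕ → ι) :
    EquicontinuousOn (fun (N : ℕ) x => (N : ℝ)⁻¹ * ∑ j ∈ range N, F (u j) x) S := by
  intro x hx
  have hFx := hF x hx
  rw [Metric.uniformity_basis_dist.equicontinuousWithinAt_iff_right] at hFx ⊢
  intro ε hε
  filter_upwards [hFx (ε / 2) (half_pos hε)] with y hy N
  have hbound := abs_inv_mul_sum_range_le (c := fun j => F (u j) x - F (u j) y)
    (half_pos hε).le (N := N) fun j _ => (hy (u j)).le
  simp only [Real.dist_eq, ← mul_sub, ← sum_sub_distrib] at hbound ⊢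
  linarith

theorem IsCompact.equicontinuousOn_indicator {α β E : Type*} [TopologicalSpace α]
    [TopologicalSpace β] [UniformSpace E] [Zero E] {f : α → β → E} {s : Set α} {k : Set β}
    (hk : IsCompact k) (hf : ContinuousOn (Function.uncurry f) (s ×ˢ k)) :
    EquicontinuousOn (fun x a => k.indicator (f a) x) s := by
  intro q hq u hu
  obtain ⟨v, hv, hvu⟩ := hk.mem_uniformity_of_prod hf hq (symm_le_uniformity hu)
  filter_upwards [hv] with p hp x
  by_cases hx : x ∈ k
  · simpa [Set.indicator_of_mem hx] using hvu p hp x hx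
  · simpa [Set.indicator_of_notMem hx] using refl_mem_uniformity hu

theorem EquicontinuousOn.tendstoUniformlyOn_of_tendsto_of_subset_closure {ι X α : Type*}
    [TopologicalSpace X] [UniformSpace α] {F : ι → X → α} {f : X → α} {l : Filter ι}
    {K D : Set X} (hK : IsCompact K) (hF : EquicontinuousOn F K) (hf : ContinuousOn f K)
    (hDK : D ⊆ K) (hKD : K ⊆ closure D) (h : ∀ x ∈ D, Tendsto (F · x) l (𝓝 (f x))) :
    TendstoUniformlyOn F f l K := by
  have : CompactSpace K := isCompact_iff_compactSpace.1 hK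
  have hF' : Equicontinuous (K.domRestrict ∘ F) := (equicontinuous_restrict_iff F).2 hF
  have hdense : Dense ((↑) ⁻¹' D : Set K) := by
    rw [Subtype.dense_iff, Subtype.image_preimage_coe, Set.inter_eq_self_of_subset_right hDK]
    exact hKD
  have hpointwise : ∀ x : K, Tendsto (F · x) l (𝓝 (f x)) := by
    have hclosed := hF'.isClosed_setOfPred_tendsto (l := l) hf.domRestrict
    intro x
    exact hclosed.closure_subset_iff.2 (fun y hy => h y hy) (hdense x)
  rw [tendstoUniformlyOn_iff_tendstoUniformly_comp_coe]
  exact UniformFun.tendsto_iff_tendstoUniformly.1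
    ((hF'.tendsto_uniformFun_iff_pi l _).2 (tendsto_pi_nhds.2 hpointwise))

theorem tendsto_of_tendstoUniformlyOn_of_forall_lt {ι α : Type*} [TopologicalSpace α]
    {l : Filter ι} {P : Set α} (hP : IsCompact P) {g : α → ℝ} (hg : ContinuousOn g P) {x₀ : α}
    (hmax : ∀ x ∈ P, x ≠ x₀ → g x < g x₀) {G : ι → α → ℝ} (hG : TendstoUniformlyOn G g l P)
    (hx₀ : x₀ ∈ P) {x : ι → α} (hxP : ∀ n, x n ∈ P) (hx : ∀ n, G n x₀ ≤ G n (x n)) :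
    Tendsto x l (𝓝 x₀) := by
  rw [tendsto_nhds]
  intro U hU hx₀U
  obtain hQ | hQ := (P \ U).eq_empty_or_nonempty
  · exact univ_mem' fun n => by_contra fun hn => hQ.subset ⟨hxP n, hn⟩
  obtain ⟨y, hyQ, hymax⟩ := (hP.diff hU).exists_isMaxOn hQ (hg.mono Set.sdiff_subset)
  have hgap : 0 < g x₀ - g y := sub_pos.2 (hmax y hyQ.1 fun h => hyQ.2 (h ▸ hx₀U))
  filter_upwards [Metric.tendstoUniformlyOn_iff.1 hG _ (half_pos hgap)] with n hn
  by_contra hxU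
  have h₀ := hn x₀ hx₀
  have h₁ := hn (x n) (hxP n)
  have h₂ : g (x n) ≤ g y := hymax ⟨hxP n, hxU⟩
  rw [Real.dist_eq, abs_lt] at h₀ h₁
  linarith [hx n]

theorem ContinuousOn.measurable_indicator {α γ : Type*} [MeasurableSpace α] [TopologicalSpace α]
    [OpensMeasurableSpace α] [TopologicalSpace γ] [MeasurableSpace γ] [BorelSpace γ] [Zero γ]
    {f : α → γ} {s : Set α} (hf : ContinuousOn f s) (hs : MeasurableSet s) :
    Measurable (s.indicator f) := by
  classical
  rw [← Set.piecewise_eq_indicator]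
  exact hf.measurable_piecewise (continuousOn_const (c := 0)) hs

theorem ContinuousOn.integrable_indicator_comp {β Ω : Type*} [TopologicalSpace β]
    [MeasurableSpace β] [OpensMeasurableSpace β] [T2Space β] [MeasurableSpace Ω]
    {μ : Measure Ω} [IsFiniteMeasure μ] {h : β → ℝ} {Θ : Set β} (hh : ContinuousOn h Θ)
    (hΘ : IsCompact Θ) {X : Ω → β} (hX : AEMeasurable X μ) :
    Integrable (fun ω => Θ.indicator h (X ω)) μ := by
  obtain ⟨C, hC⟩ := hΘ.exists_bound_of_continuousOn hh
  have hbound : ∀ x, ‖Θ.indicator h x‖ ≤ max C 0 := fun x => by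
    by_cases hx : x ∈ Θ
    · rw [Set.indicator_of_mem hx]
      exact (hC x hx).trans (le_max_left C 0)
    · simp [Set.indicator_of_notMem hx]
  exact .of_bound
    ((hh.measurable_indicator hΘ.measurableSet).comp_aemeasurable hX).aestronglyMeasurable _
    (.of_forall fun ω => hbound (X ω))

theorem EquicontinuousOn.continuousOn_integral {α E : Type*} [TopologicalSpace α]
    [MeasurableSpace E] {ν : Measure E} [IsFiniteMeasure ν] {h : α → E → ℝ} {P : Set α}
    (hequi : EquicontinuousOn (fun x a => h a x) P) (hint : ∀ a ∈ P, Integrable (h a) ν) :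
    ContinuousOn (fun a => ∫ x, h a x ∂ν) P := by
  intro a ha
  have hequi_a := hequi a ha
  rw [Metric.uniformity_basis_dist.equicontinuousWithinAt_iff_right] at hequi_a
  rw [ContinuousWithinAt, Metric.tendsto_nhds]
  intro ε hε
  have hν : 0 < ν.real Set.univ + 1 := by positivity
  filter_upwards [hequi_a (ε / (ν.real Set.univ + 1)) (div_pos hε hν), self_mem_nhdsWithin]
    with b hb hbP
  rw [dist_comm, dist_eq_norm, ← integral_sub (hint a ha) (hint b hbP)]
  calc ‖∫ x, (h a x - h b x) ∂ν‖ ≤ ε / (ν.real Set.univ + 1) * ν.real Set.univ :=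
        norm_integral_le_of_norm_le_const (Eventually.of_forall fun x => (hb x).le)
    _ < ε := by
        rw [div_mul_eq_mul_div, div_lt_iff₀ hν]
        nlinarith

theorem ae_mem_of_map_eq_withDensity {Ω β : Type*} [MeasurableSpace Ω] [MeasurableSpace β]
    {μ : Measure Ω} {ν : Measure β} {X : Ω → β} {s : Set β} {w : β → ENNReal}
    (hX : AEMeasurable X μ) (hs : MeasurableSet s) (hmap : μ.map X = (ν.restrict s).withDensity w) :
    ∀ᵐ ω ∂μ, X ω ∈ s :=
  ae_of_ae_map hX <| hmap ▸ (withDensity_absolutelyContinuous _ _).ae_le (ae_restrict_mem hs)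

theorem integral_comp_of_map_eq_withDensity {Ω β : Type*} [MeasurableSpace Ω]
    [MeasurableSpace β] {μ : Measure Ω} {ν : Measure β} {X : Ω → β} {s : Set β} {w φ : β → ℝ}
    (hX : AEMeasurable X μ) (hφ : Measurable (s.indicator φ)) (hw : AEMeasurable w (ν.restrict s))
    (hw0 : ∀ x ∈ s, 0 ≤ w x) (hs : MeasurableSet s)
    (hmap : μ.map X = (ν.restrict s).withDensity (fun x => ENNReal.ofReal (w x))) :
    ∫ ω, φ (X ω) ∂μ = ∫ x in s, φ x * w x ∂ν := by
  have hind : ∫ ω, φ (X ω) ∂μ = ∫ ω, s.indicator φ (X ω) ∂μ := integral_congr_ae <|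
    (ae_mem_of_map_eq_withDensity hX hs hmap).mono fun ω hω => (Set.indicator_of_mem hω _).symm
  rw [hind, ← integral_map hX hφ.aestronglyMeasurable, hmap,
    integral_withDensity_eq_integral_toReal_smul₀ hw.ennreal_ofReal
      (Eventually.of_forall fun _ => ENNReal.ofReal_lt_top)]
  refine setIntegral_congr_fun hs fun x hx => ?_
  rw [ENNReal.toReal_ofReal (hw0 x hx), Set.indicator_of_mem hx, smul_eq_mul, mul_comm]

theorem integral_log_mul_le_integral_log_mul_self {β : Type*} [MeasurableSpace β]
    {ν : Measure β} {p q : β → ℝ} (hp : ∀ᵐ x ∂ν, 0 < p x) (hq : ∀ᵐ x ∂ν, 0 < q x)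
    (hpi : Integrable p ν) (hqi : Integrable q ν) (hpq : ∫ x, q x ∂ν ≤ ∫ x, p x ∂ν)
    (hlq : Integrable (fun x => Real.log (q x) * p x) ν)
    (hlp : Integrable (fun x => Real.log (p x) * p x) ν) :
    ∫ x, Real.log (q x) * p x ∂ν ≤ ∫ x, Real.log (p x) * p x ∂ν := by
  have hpoint : ∀ᵐ x ∂ν, Real.log (q x) * p x ≤ Real.log (p x) * p x + (q x - p x) := by
    filter_upwards [hp, hq] with x hpx hqx
    have hlog := Real.log_le_sub_one_of_pos (div_pos hqx hpx)
    rw [Real.log_div hqx.ne' hpx.ne'] at hlog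
    have := mul_le_mul_of_nonneg_right hlog hpx.le
    rwa [sub_one_mul, div_mul_cancel₀ _ hpx.ne', sub_mul, sub_le_iff_le_add'] at this
  have hqpi : Integrable (fun x => q x - p x) ν := hqi.sub hpi
  calc ∫ x, Real.log (q x) * p x ∂ν ≤ ∫ x, (Real.log (p x) * p x + (q x - p x)) ∂ν :=
        integral_mono_ae hlq (hlp.add hqpi) hpoint
    _ = ∫ x, Real.log (p x) * p x ∂ν + ((∫ x, q x ∂ν) - ∫ x, p x ∂ν) := by
        rw [integral_add hlp hqpi, integral_sub hqi hpi]
    _ ≤ ∫ x, Real.log (p x) * p x ∂ν := by linarith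

theorem setIntegral_log_mul_lt_of_ne {β : Type*} [TopologicalSpace β] [MeasurableSpace β]
    [OpensMeasurableSpace β] [T2Space β] {ν : Measure β} [IsFiniteMeasureOnCompacts ν]
    {Θ : Set β} (hΘ : IsCompact Θ) {p q : β → ℝ} (hp : ContinuousOn p Θ) (hq : ContinuousOn q Θ)
    (hp0 : ∀ x ∈ Θ, 0 < p x) (hq0 : ∀ x ∈ Θ, 0 < q x)
    (hpq : ∫ x in Θ, q x ∂ν ≤ ∫ x in Θ, p x ∂ν)
    (hne : ∫ x in Θ, Real.log (q x) * p x ∂ν ≠ ∫ x in Θ, Real.log (p x) * p x ∂ν) :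
    ∫ x in Θ, Real.log (q x) * p x ∂ν < ∫ x in Θ, Real.log (p x) * p x ∂ν := by
  have hae : ∀ r : β → ℝ, (∀ x ∈ Θ, 0 < r x) → ∀ᵐ x ∂ν.restrict Θ, 0 < r x := fun r hr =>
    (ae_restrict_mem hΘ.measurableSet).mono hr
  have hlog : ∀ r : β → ℝ, ContinuousOn r Θ → (∀ x ∈ Θ, 0 < r x) →
      IntegrableOn (fun x => Real.log (r x) * p x) Θ ν := fun r hr hr0 =>
    ((hr.log fun x hx => (hr0 x hx).ne').mul hp).integrableOn_compact hΘ
  exact (integral_log_mul_le_integral_log_mul_self (hae p hp0) (hae q hq0)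
    (hp.integrableOn_compact hΘ) (hq.integrableOn_compact hΘ) hpq (hlog q hq hq0)
    (hlog p hp hp0)).lt_of_ne hne

theorem integral_log_comp_lt_of_map_eq_withDensity {Ω β : Type*} [MeasurableSpace Ω]
    [TopologicalSpace β] [MeasurableSpace β] [OpensMeasurableSpace β] [T2Space β]
    {μ : Measure Ω} {ν : Measure β} [IsFiniteMeasureOnCompacts ν] {Θ : Set β} (hΘ : IsCompact Θ)
    {p q : β → ℝ} (hp : ContinuousOn p Θ) (hq : ContinuousOn q Θ) (hp0 : ∀ x ∈ Θ, 0 < p x)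
    (hq0 : ∀ x ∈ Θ, 0 < q x) (hpq : ∫ x in Θ, q x ∂ν ≤ ∫ x in Θ, p x ∂ν)
    (hne : ∫ x in Θ, Real.log (q x) * p x ∂ν ≠ ∫ x in Θ, Real.log (p x) * p x ∂ν)
    {X : Ω → β} (hX : AEMeasurable X μ)
    (hmap : μ.map X = (ν.restrict Θ).withDensity (fun x => ENNReal.ofReal (p x))) :
    ∫ ω, Real.log (q (X ω)) ∂μ < ∫ ω, Real.log (p (X ω)) ∂μ := by
  have hmean : ∀ r : β → ℝ, ContinuousOn r Θ → (∀ x ∈ Θ, 0 < r x) →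
      ∫ ω, Real.log (r (X ω)) ∂μ = ∫ x in Θ, Real.log (r x) * p x ∂ν := fun r hr hr0 =>
    integral_comp_of_map_eq_withDensity hX
      ((hr.log fun x hx => (hr0 x hx).ne').measurable_indicator hΘ.measurableSet)
      (hp.aemeasurable hΘ.measurableSet) (fun x hx => (hp0 x hx).le) hΘ.measurableSet hmap
  rw [hmean q hq hq0, hmean p hp hp0]
  exact setIntegral_log_mul_lt_of_ne hΘ hp hq hp0 hq0 hpq hne

theorem ProbabilityTheory.ae_tendstoUniformlyOn_average {Ω E α : Type*} [MeasurableSpace Ω]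
    {μ : Measure Ω} [IsFiniteMeasure μ] [MeasurableSpace E] [PseudoMetricSpace α]
    {X : ℕ → Ω → E} (hindep : iIndepFun X μ)
    (hident : ∀ j, IdentDistrib (X j) (X 0) μ μ) {h : α → E → ℝ} {P : Set α}
    (hP : IsCompact P) (hmeas : ∀ a ∈ P, Measurable (h a))
    (hint : ∀ a ∈ P, Integrable (fun ω => h a (X 0 ω)) μ)
    (hequi : EquicontinuousOn (fun x a => h a x) P) :
    ∀ᵐ ω ∂μ, TendstoUniformlyOn (fun (N : ℕ) a => (N : ℝ)⁻¹ * ∑ j ∈ range N, h a (X j ω))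
      (fun a => ∫ ω, h a (X 0 ω) ∂μ) atTop P := by
  obtain ⟨D, hDP, hDc, hPD⟩ := hP.isSeparable.exists_countable_dense_subset
  have hslln : ∀ a ∈ P, ∀ᵐ ω ∂μ, Tendsto (fun (N : ℕ) => (N : ℝ)⁻¹ * ∑ j ∈ range N, h a (X j ω))
      atTop (𝓝 (∫ ω, h a (X 0 ω) ∂μ)) := fun a ha =>
    strong_law_ae (fun j ω => h a (X j ω)) (hint a ha)
      (fun i j hij => (hindep.indepFun hij).comp (hmeas a ha) (hmeas a ha))
      (fun j => (hident j).comp (hmeas a ha))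
  have hcont_mean : ContinuousOn (fun a => ∫ ω, h a (X 0 ω) ∂μ) P :=
    EquicontinuousOn.continuousOn_integral (fun a ha => (hequi a ha).comp (X 0)) hint
  filter_upwards [(ae_ball_iff hDc).2 fun a ha => hslln a (hDP ha)] with ω hω
  exact (hequi.average fun j => X j ω).tendstoUniformlyOn_of_tendsto_of_subset_closure
    hP hcont_mean hDP hPD hω

theorem ProbabilityTheory.ae_tendstoUniformlyOn_average_of_continuousOn {Ω α β : Type*}
    [MeasurableSpace Ω] {μ : Measure Ω} [IsFiniteMeasure μ] [PseudoMetricSpace α]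
    [TopologicalSpace β] [MeasurableSpace β] [OpensMeasurableSpace β] [T2Space β]
    {X : ℕ → Ω → β} (hindep : iIndepFun X μ) (hident : ∀ j, IdentDistrib (X j) (X 0) μ μ)
    {h : α → β → ℝ} {P : Set α} {Θ : Set β} (hP : IsCompact P) (hΘ : IsCompact Θ)
    (hh : ContinuousOn (fun q : α × β => h q.1 q.2) (P ×ˢ Θ)) (hXΘ : ∀ j, ∀ᵐ ω ∂μ, X j ω ∈ Θ) :
    ∀ᵐ ω ∂μ, TendstoUniformlyOn (fun (N : ℕ) a => (N : ℝ)⁻¹ * ∑ j ∈ range N, h a (X j ω))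
      (fun a => ∫ ω, h a (X 0 ω) ∂μ) atTop P := by
  have hsection : ∀ a ∈ P, ContinuousOn (h a) Θ := fun a ha =>
    hh.comp (Continuous.prodMk_right a).continuousOn fun θ hθ => ⟨ha, hθ⟩
  -- `h a` is only controlled on `Θ`; extended by zero it becomes measurable and bounded.
  have hmean : (fun a => ∫ ω, Θ.indicator (h a) (X 0 ω) ∂μ) = fun a => ∫ ω, h a (X 0 ω) ∂μ :=
    funext fun a => integral_congr_ae <| (hXΘ 0).mono fun ω hω => Set.indicator_of_mem hω _
  filter_upwards [ae_tendstoUniformlyOn_average (h := fun a => Θ.indicator (h a)) hindep hident hP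
    (fun a ha => (hsection a ha).measurable_indicator hΘ.measurableSet)
    (fun a ha => (hsection a ha).integrable_indicator_comp hΘ (hident 0).aemeasurable_fst)
    (hΘ.equicontinuousOn_indicator hh), ae_all_iff.2 hXΘ] with ω hω hωΘ
  rw [← hmean]
  convert hω using 4 with N a
  simp only [Set.indicator_of_mem (hωΘ _)]

theorem stmt_9_general {d p : ℕ}
    (Θ : Set (EuclideanSpace ℝ (Fin d)))
    (P Pt : Set (EuclideanSpace ℝ (Fin p)))
    (hΘ : IsCompact Θ) (hP : IsCompact P) (hPPt : P ⊆ Pt)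
    (f : EuclideanSpace ℝ (Fin p) → EuclideanSpace ℝ (Fin d) → ℝ)
    (δ : ℝ) (hδ : 0 < δ)
    (hfcont : ContinuousOn (fun q : EuclideanSpace ℝ (Fin p) × EuclideanSpace ℝ (Fin d) =>
        f q.1 q.2) (Pt ×ˢ Θ))
    (hflb : ∀ ζ ∈ Pt, ∀ θ ∈ Θ, δ ≤ f ζ θ)
    (hfdens : ∀ ζ ∈ Pt, (∫ θ in Θ, f ζ θ) = 1)
    (hident : ∀ ζ ∈ P, ∀ ζ' ∈ P, ∀ ζ'' ∈ P,
      ((∫ θ in Θ, Real.log (f ζ θ) * f ζ'' θ) =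
        (∫ θ in Θ, Real.log (f ζ' θ) * f ζ'' θ)) ↔ ζ = ζ')
    (ζ0 : EuclideanSpace ℝ (Fin p)) (hζ0 : ζ0 ∈ P)
    {Ω : Type*} [MeasurableSpace Ω] (μ : Measure Ω) [IsProbabilityMeasure μ]
    (θseq : ℕ → Ω → EuclideanSpace ℝ (Fin d))
    (hmeas : ∀ j, Measurable (θseq j))
    (hindep : ProbabilityTheory.iIndepFun θseq μ)
    (hdist : ∀ j, Measure.map (θseq j) μ =
      (volume.restrict Θ).withDensity (fun θ => ENNReal.ofReal (f ζ0 θ)))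
    (ζhat : ℕ → Ω → EuclideanSpace ℝ (Fin p))
    (hζhat : ∀ N ω, ζhat N ω ∈ P ∧ ∀ ζ ∈ P,
      (-(1 / (N : ℝ)) * ∑ j ∈ Finset.range N, Real.log (f (ζhat N ω) (θseq j ω))) ≤
        (-(1 / (N : ℝ)) * ∑ j ∈ Finset.range N, Real.log (f ζ (θseq j ω)))) :
    ∀ᵐ ω ∂μ, Tendsto (fun N => ζhat N ω) atTop (nhds ζ0) := by
  have hpos : ∀ ζ ∈ P, ∀ θ ∈ Θ, 0 < f ζ θ := fun ζ hζ θ hθ => hδ.trans_le (hflb ζ (hPPt hζ) θ hθ)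
  have hfP : ContinuousOn (fun q : _ × _ => f q.1 q.2) (P ×ˢ Θ) :=
    hfcont.mono (Set.prod_mono hPPt subset_rfl)
  have hlogP : ContinuousOn (fun q : _ × _ => Real.log (f q.1 q.2)) (P ×ˢ Θ) :=
    hfP.log fun q hq => (hpos q.1 hq.1 q.2 hq.2).ne'
  have hfΘ : ∀ ζ ∈ P, ContinuousOn (f ζ) Θ := fun ζ hζ =>
    hfP.comp (Continuous.prodMk_right ζ).continuousOn fun θ hθ => ⟨hζ, hθ⟩
  have hmax : ∀ ζ ∈ P, ζ ≠ ζ0 →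
      ∫ ω, Real.log (f ζ (θseq 0 ω)) ∂μ < ∫ ω, Real.log (f ζ0 (θseq 0 ω)) ∂μ := fun ζ hζ hne =>
    integral_log_comp_lt_of_map_eq_withDensity hΘ (hfΘ ζ0 hζ0) (hfΘ ζ hζ) (hpos ζ0 hζ0)
      (hpos ζ hζ) (by rw [hfdens ζ (hPPt hζ), hfdens ζ0 (hPPt hζ0)])
      (fun h => hne ((hident ζ hζ ζ0 hζ0 ζ0 hζ0).1 h)) (hmeas 0).aemeasurable (hdist 0)
  have hinΘ : ∀ j, ∀ᵐ ω ∂μ, θseq j ω ∈ Θ := fun j =>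
    ae_mem_of_map_eq_withDensity (hmeas j).aemeasurable hΘ.measurableSet (hdist j)
  have hiid : ∀ j, ProbabilityTheory.IdentDistrib (θseq j) (θseq 0) μ μ := fun j =>
    ⟨(hmeas j).aemeasurable, (hmeas 0).aemeasurable, by rw [hdist j, hdist 0]⟩
  filter_upwards [ProbabilityTheory.ae_tendstoUniformlyOn_average_of_continuousOn hindep hiid hP hΘ
    (h := fun ζ θ => Real.log (f ζ θ)) hlogP hinΘ, ae_all_iff.2 hinΘ] with ω hunif hωΘ
  have hcont : ∀ N : ℕ, ContinuousOn
      (fun ζ => (N : ℝ)⁻¹ * ∑ j ∈ range N, Real.log (f ζ (θseq j ω))) P := fun N =>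
    continuousOn_const.mul <| continuousOn_finsetSum _ fun j _ =>
      hlogP.comp (Continuous.prodMk_left _).continuousOn fun ζ hζ => ⟨hζ, hωΘ j⟩
  refine tendsto_of_tendstoUniformlyOn_of_forall_lt hP (hunif.continuousOn (.of_forall hcont))
    hmax hunif hζ0 (fun N => (hζhat N ω).1) fun N => ?_
  have hmin := (hζhat N ω).2 ζ0 hζ0
  rwa [neg_mul, neg_mul, neg_le_neg_iff, one_div] at hmin

/-- Strong consistency of the maximum likelihood estimator: for an i.i.d. sample
`θ_j` with density `f(ζ⁰,·)` on `Θ`, under the identifiability condition, any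
sequence `ζ̂_N` of minimizers over `P` of the scaled negative log-likelihood
`ζ ↦ −(1/N) Σ_{j<N} log f(ζ,θ_j)` converges to `ζ⁰` almost surely. -/
theorem stmt_9 {d p : ℕ}
    (Θ : Set (EuclideanSpace ℝ (Fin d)))
    (P Pt : Set (EuclideanSpace ℝ (Fin p)))
    (hΘ : IsCompact Θ) (hP : IsCompact P) (hPt : IsOpen Pt) (hPPt : P ⊆ Pt)
    (f : EuclideanSpace ℝ (Fin p) → EuclideanSpace ℝ (Fin d) → ℝ)
    (δ M K : ℝ) (hδ : 0 < δ) (hδM : δ ≤ M)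
    (hfcont : ContinuousOn (fun q : EuclideanSpace ℝ (Fin p) × EuclideanSpace ℝ (Fin d) =>
        f q.1 q.2) (Pt ×ˢ Θ))
    (hflb : ∀ ζ ∈ Pt, ∀ θ ∈ Θ, δ ≤ f ζ θ)
    (hfub : ∀ ζ ∈ Pt, ∀ θ ∈ Θ, f ζ θ ≤ M)
    (hfdens : ∀ ζ ∈ Pt, (∫ θ in Θ, f ζ θ) = 1)
    (Df : EuclideanSpace ℝ (Fin p) → EuclideanSpace ℝ (Fin d) →
      (EuclideanSpace ℝ (Fin p) →L[ℝ] ℝ))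
    (hfderiv : ∀ ζ ∈ Pt, ∀ θ ∈ Θ, HasFDerivAt (fun z => f z θ) (Df ζ θ) ζ)
    (hfgrad : ∀ ζ ∈ Pt, ∀ θ ∈ Θ, ‖Df ζ θ‖ ≤ K)
    (hident : ∀ ζ ∈ P, ∀ ζ' ∈ P, ∀ ζ'' ∈ P,
      ((∫ θ in Θ, Real.log (f ζ θ) * f ζ'' θ) =
        (∫ θ in Θ, Real.log (f ζ' θ) * f ζ'' θ)) ↔ ζ = ζ')
    (ζ0 : EuclideanSpace ℝ (Fin p)) (hζ0 : ζ0 ∈ P)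
    {Ω : Type*} [MeasurableSpace Ω] (μ : Measure Ω) [IsProbabilityMeasure μ]
    (θseq : ℕ → Ω → EuclideanSpace ℝ (Fin d))
    (hmeas : ∀ j, Measurable (θseq j))
    (hindep : ProbabilityTheory.iIndepFun θseq μ)
    (hdist : ∀ j, Measure.map (θseq j) μ =
      (volume.restrict Θ).withDensity (fun θ => ENNReal.ofReal (f ζ0 θ)))
    (ζhat : ℕ → Ω → EuclideanSpace ℝ (Fin p))
    (hζhat : ∀ N ω, ζhat N ω ∈ P ∧ ∀ ζ ∈ P,
      (-(1 / (N : ℝ)) * ∑ j ∈ Finset.range N, Real.log (f (ζhat N ω) (θseq j ω))) ≤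
        (-(1 / (N : ℝ)) * ∑ j ∈ Finset.range N, Real.log (f ζ (θseq j ω)))) :
    ∀ᵐ ω ∂μ, Tendsto (fun N => ζhat N ω) atTop (nhds ζ0) :=
  stmt_9_general Θ P Pt hΘ hP hPPt f δ hδ hfcont hflb hfdens hident ζ0 hζ0 μ θseq hmeas hindep hdist
    ζhat hζhat
end

section
/- Let A be an n×n real matrix with ‖exp(tA)‖ ≤ β e^{−ρt} for all t ≥ 0 with constants β, ρ > 0. Let B : [0,∞) → ℝ^{n×n} be measurable and bounded with B(t) → 0 as t → ∞, and let y : [0,∞) → ℝⁿ be locally square integrable with limsup_{T→∞} (1/T) ∫_0^T ‖y(s)‖² ds < ∞. Define z(t) = ∫_0^t exp((t−s)A) B(s) y(s) ds. Then lim_{T→∞} (1/T) ∫_0^T ‖z(t)‖² dt = 0. -/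
/-!
Write the integrand as `Φ(t - s) q(s)` with `‖Φ(u)‖ ≤ k(u) := β e^{-ρu}` for `u ≥ 0` and
`‖q(s)‖ ≤ m(s) := ‖B(s)‖ ‖y(s)‖`. Once `m` is truncated to `(0, T]`, `‖z‖` is dominated on
`[0, T]` by the convolution `m ⋆ k`, and Young's inequality `‖m ⋆ k‖₂ ≤ ‖k‖₁ ‖m‖₂` (Cauchy–Schwarz
against the weight `k(t - ·)`, then Tonelli) gives `∫₀ᵀ ‖z‖² ≤ (β/ρ)² ∫₀ᵀ m²`. Since `B(s) → 0`,
`m² = o(‖y‖²)`, and a function that is `o` of one with bounded averages has averages tending to `0`.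
-/

open MeasureTheory Filter Set Asymptotics Topology
open scoped ENNReal

namespace MeasureTheory

theorem sq_lintegral_mul_le {α : Type*} [MeasurableSpace α] {μ : Measure α} {w h : α → ℝ≥0∞}
    (hw : AEMeasurable w μ) (hh : AEMeasurable h μ) :
    (∫⁻ a, w a * h a ∂μ) ^ 2 ≤ (∫⁻ a, w a ∂μ) * ∫⁻ a, w a * h a ^ 2 ∂μ := by
  have hsplit : ∀ a, w a * h a = w a ^ (2⁻¹ : ℝ) * (w a * h a ^ 2) ^ (2⁻¹ : ℝ) := fun a => by
    rw [ENNReal.mul_rpow_of_nonneg _ _ (by norm_num), ← mul_assoc,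
      ← ENNReal.rpow_add_of_nonneg _ _ (by norm_num) (by norm_num), ← ENNReal.rpow_natCast,
      ← ENNReal.rpow_mul]
    norm_num
  have holder : ∫⁻ a, w a ^ (2⁻¹ : ℝ) * (w a * h a ^ 2) ^ (2⁻¹ : ℝ) ∂μ
      ≤ (∫⁻ a, w a ∂μ) ^ (2⁻¹ : ℝ) * (∫⁻ a, w a * h a ^ 2 ∂μ) ^ (2⁻¹ : ℝ) :=
    ENNReal.lintegral_mul_norm_pow_le hw (hw.mul (hh.pow_const 2)) (by norm_num) (by norm_num)
      (by norm_num)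
  rw [← lintegral_congr hsplit] at holder
  calc (∫⁻ a, w a * h a ∂μ) ^ 2
      ≤ ((∫⁻ a, w a ∂μ) ^ (2⁻¹ : ℝ) * (∫⁻ a, w a * h a ^ 2 ∂μ) ^ (2⁻¹ : ℝ)) ^ 2 := by gcongr
    _ = (∫⁻ a, w a ∂μ) * ∫⁻ a, w a * h a ^ 2 ∂μ := by
      rw [mul_pow, ← ENNReal.rpow_natCast, ← ENNReal.rpow_natCast, ← ENNReal.rpow_mul,
        ← ENNReal.rpow_mul]
      norm_num

section Convolution

variable {G : Type*} [MeasurableSpace G] {μ : Measure G} [SFinite μ]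

theorem lintegral_lconvolution [AddGroup G] [MeasurableAdd₂ G] [MeasurableNeg G]
    [μ.IsAddLeftInvariant] {f g : G → ℝ≥0∞} (hf : Measurable f) (hg : Measurable g) :
    ∫⁻ x, (f ⋆ₗ[μ] g) x ∂μ = (∫⁻ x, f x ∂μ) * ∫⁻ x, g x ∂μ := by
  simp only [lconvolution_def]
  rw [lintegral_lintegral_swap
    ((hf.comp measurable_snd).mul (hg.comp (measurable_snd.neg.add measurable_fst))).aemeasurable]
  calc ∫⁻ y, ∫⁻ x, f y * g (-y + x) ∂μ ∂μ = ∫⁻ y, f y * ∫⁻ x, g x ∂μ ∂μ :=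
        lintegral_congr fun y => by
          rw [lintegral_const_mul (f := fun x => g (-y + x)) _
              (hg.comp (measurable_const_add (-y))), lintegral_add_left_eq_self g]
    _ = (∫⁻ x, f x ∂μ) * ∫⁻ x, g x ∂μ := lintegral_mul_const _ hf

theorem lintegral_lconvolution_sq_le [AddCommGroup G] [MeasurableAdd₂ G] [MeasurableNeg G]
    [μ.IsAddLeftInvariant] [μ.IsNegInvariant] {f g : G → ℝ≥0∞} (hf : Measurable f)
    (hg : Measurable g) :
    ∫⁻ x, (f ⋆ₗ[μ] g) x ^ 2 ∂μ ≤ (∫⁻ x, g x ∂μ) ^ 2 * ∫⁻ x, f x ^ 2 ∂μ := by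
  have hpt : ∀ x, (f ⋆ₗ[μ] g) x ^ 2 ≤ (∫⁻ x, g x ∂μ) * ((fun y => f y ^ 2) ⋆ₗ[μ] g) x := by
    intro x
    have hshift : ∫⁻ y, g (-y + x) ∂μ = ∫⁻ x, g x ∂μ := by
      simp_rw [neg_add_eq_sub]
      exact lintegral_sub_left_eq_self g x
    simp only [lconvolution_def]
    simp_rw [mul_comm (f _), mul_comm (f _ ^ 2)]
    rw [← hshift]
    exact sq_lintegral_mul_le (w := fun y => g (-y + x))
      (hg.comp (measurable_neg.add_const x)).aemeasurable hf.aemeasurable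
  calc ∫⁻ x, (f ⋆ₗ[μ] g) x ^ 2 ∂μ
      ≤ ∫⁻ x, (∫⁻ x, g x ∂μ) * ((fun y => f y ^ 2) ⋆ₗ[μ] g) x ∂μ := lintegral_mono hpt
    _ = (∫⁻ x, g x ∂μ) ^ 2 * ∫⁻ x, f x ^ 2 ∂μ := by
      rw [lintegral_const_mul _ (measurable_lconvolution μ (by fun_prop) hg),
        lintegral_lconvolution (by fun_prop) hg]
      ring

end Convolution

section Volterra

noncomputable def expKernel (β ρ : ℝ) : ℝ → ℝ≥0∞ :=
  (Ici 0).indicator fun u => ENNReal.ofReal (β * Real.exp (-ρ * u))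

theorem measurable_expKernel (β ρ : ℝ) : Measurable (expKernel β ρ) :=
  (by fun_prop : Measurable fun u : ℝ => ENNReal.ofReal (β * Real.exp (-ρ * u))).indicator
    measurableSet_Ici

theorem lintegral_expKernel {β ρ : ℝ} (hβ : 0 ≤ β) (hρ : 0 < ρ) :
    ∫⁻ u, expKernel β ρ u = ENNReal.ofReal (β / ρ) := by
  rw [expKernel, lintegral_indicator measurableSet_Ici, setLIntegral_congr Ioi_ae_eq_Ici.symm,
    ← ofReal_integral_eq_lintegral_ofReal ((exp_neg_integrableOn_Ioi 0 hρ).const_mul β)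
      (ae_of_all _ fun u => by positivity),
    integral_const_mul, integral_exp_mul_Ioi (by linarith) 0]
  congr 1
  field_simp
  simp

variable {E F : Type*} [NormedAddCommGroup E] [NormedSpace ℝ E] [NormedAddCommGroup F]
  [NormedSpace ℝ F] {Φ : ℝ → E →L[ℝ] F} {β ρ : ℝ} {q : ℝ → E} {m : ℝ → ℝ}

theorem ofReal_norm_integral_le_lconvolution
    (hΦ : ∀ u, 0 ≤ u → ‖Φ u‖ ≤ β * Real.exp (-ρ * u)) (hqm : ∀ s, ‖q s‖ ≤ m s)
    {t T : ℝ} (ht : 0 ≤ t) (htT : t ≤ T) :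
    ENNReal.ofReal ‖∫ s in 0..t, Φ (t - s) (q s)‖
      ≤ ((Ioc 0 T).indicator (fun s => ENNReal.ofReal (m s)) ⋆ₗ expKernel β ρ) t := by
  rw [intervalIntegral.integral_of_le ht, ofReal_norm, lconvolution_def]
  refine (enorm_integral_le_lintegral_enorm _).trans <|
    (setLIntegral_mono' measurableSet_Ioc fun s hs => ?_).trans (setLIntegral_le_lintegral _ _)
  have hts : 0 ≤ t - s := sub_nonneg.2 hs.2
  rw [neg_add_eq_sub, indicator_of_mem (show s ∈ Ioc 0 T from ⟨hs.1, hs.2.trans htT⟩), expKernel,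
    indicator_of_mem (mem_Ici.2 hts), ← ofReal_norm,
    ← ENNReal.ofReal_mul ((norm_nonneg _).trans (hqm s))]
  refine ENNReal.ofReal_le_ofReal ?_
  calc ‖Φ (t - s) (q s)‖ ≤ ‖Φ (t - s)‖ * ‖q s‖ := (Φ (t - s)).le_opNorm (q s)
    _ ≤ β * Real.exp (-ρ * (t - s)) * m s :=
      mul_le_mul (hΦ _ hts) (hqm s) (norm_nonneg _) ((norm_nonneg _).trans (hΦ _ hts))
    _ = m s * (β * Real.exp (-ρ * (t - s))) := mul_comm _ _

theorem integral_sq_norm_volterra_le (hρ : 0 < ρ)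
    (hΦ : ∀ u, 0 ≤ u → ‖Φ u‖ ≤ β * Real.exp (-ρ * u)) (hm : Measurable m)
    (hqm : ∀ s, ‖q s‖ ≤ m s) {T : ℝ} (hT : 0 ≤ T)
    (hmT : IntegrableOn (fun s => m s ^ 2) (Ioc 0 T)) :
    ∫ t in 0..T, ‖∫ s in 0..t, Φ (t - s) (q s)‖ ^ 2 ≤ (β / ρ) ^ 2 * ∫ s in 0..T, m s ^ 2 := by
  have hβ : 0 ≤ β := by simpa using (norm_nonneg _).trans (hΦ 0 le_rfl)
  have hm0 : ∀ s, 0 ≤ m s := fun s => (norm_nonneg _).trans (hqm s)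
  set f := (Ioc 0 T).indicator fun s => ENNReal.ofReal (m s)
  have hf : Measurable f := hm.ennreal_ofReal.indicator measurableSet_Ioc
  have hf_sq : (fun s => f s ^ 2) = (Ioc 0 T).indicator fun s => ENNReal.ofReal (m s ^ 2) := by
    funext s
    by_cases hs : s ∈ Ioc 0 T <;> simp [f, hs, ENNReal.ofReal_pow (hm0 s)]
  have hlin : ∫⁻ t in Ioc 0 T, ENNReal.ofReal (‖∫ s in 0..t, Φ (t - s) (q s)‖ ^ 2)
      ≤ ENNReal.ofReal (β / ρ) ^ 2 * ENNReal.ofReal (∫ s in Ioc 0 T, m s ^ 2) :=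
    calc ∫⁻ t in Ioc 0 T, ENNReal.ofReal (‖∫ s in 0..t, Φ (t - s) (q s)‖ ^ 2)
        ≤ ∫⁻ t in Ioc 0 T, (f ⋆ₗ expKernel β ρ) t ^ 2 :=
          setLIntegral_mono' measurableSet_Ioc fun t ht => by
            rw [ENNReal.ofReal_pow (norm_nonneg _)]
            gcongr
            exact ofReal_norm_integral_le_lconvolution hΦ hqm ht.1.le ht.2
      _ ≤ ∫⁻ t, (f ⋆ₗ expKernel β ρ) t ^ 2 := setLIntegral_le_lintegral _ _
      _ ≤ (∫⁻ u, expKernel β ρ u) ^ 2 * ∫⁻ s, f s ^ 2 :=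
          lintegral_lconvolution_sq_le hf (measurable_expKernel β ρ)
      _ = ENNReal.ofReal (β / ρ) ^ 2 * ENNReal.ofReal (∫ s in Ioc 0 T, m s ^ 2) := by
          rw [lintegral_expKernel hβ hρ, hf_sq, lintegral_indicator measurableSet_Ioc,
            ofReal_integral_eq_lintegral_ofReal hmT (ae_of_all _ fun s => by positivity)]
  rw [intervalIntegral.integral_of_le hT, intervalIntegral.integral_of_le hT]
  calc ∫ t in Ioc 0 T, ‖∫ s in 0..t, Φ (t - s) (q s)‖ ^ 2
      ≤ (∫⁻ t in Ioc 0 T, ENNReal.ofReal (‖∫ s in 0..t, Φ (t - s) (q s)‖ ^ 2)).toReal := by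
        have h := norm_integral_le_lintegral_norm (μ := volume.restrict (Ioc 0 T))
          (fun t => ‖∫ s in 0..t, Φ (t - s) (q s)‖ ^ 2)
        simp only [Real.norm_eq_abs, abs_pow, abs_norm] at h
        exact (le_abs_self _).trans h
    _ ≤ (ENNReal.ofReal (β / ρ) ^ 2 * ENNReal.ofReal (∫ s in Ioc 0 T, m s ^ 2)).toReal :=
        ENNReal.toReal_mono (by finiteness) hlin
    _ = (β / ρ) ^ 2 * ∫ s in Ioc 0 T, m s ^ 2 := by
        rw [ENNReal.toReal_mul, ENNReal.toReal_pow, ENNReal.toReal_ofReal (by positivity),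
          ENNReal.toReal_ofReal (setIntegral_nonneg measurableSet_Ioc fun s _ => by positivity)]

end Volterra

end MeasureTheory

theorem tendsto_average_zero_of_isLittleO {g h : ℝ → ℝ} (hg : 0 ≤ g) (hh : 0 ≤ h)
    (hgi : ∀ T, 0 < T → IntervalIntegrable g volume 0 T)
    (hhi : ∀ T, 0 < T → IntervalIntegrable h volume 0 T) (hgh : g =o[atTop] h)
    (hbdd : ∃ C, ∀ᶠ T in atTop, (1 / T) * ∫ s in 0..T, h s ≤ C) :
    Tendsto (fun T => (1 / T) * ∫ s in 0..T, g s) atTop (𝓝 0) := by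
  obtain ⟨C, hC⟩ := hbdd
  have hC₁ : 0 < max C 1 := lt_max_of_lt_right one_pos
  refine tendsto_order.2 ⟨fun a ha => ?_, fun a ha => ?_⟩
  · filter_upwards [eventually_ge_atTop 0] with T hT
    exact ha.trans_le <|
      mul_nonneg (by positivity) (intervalIntegral.integral_nonneg hT fun s _ => hg s)
  set ε := a / (2 * max C 1)
  have hε : 0 < ε := by positivity
  obtain ⟨S₀, hS₀⟩ := eventually_atTop.1 (hgh.bound hε)
  set S := max S₀ 1
  have hS : 0 < S := lt_max_of_lt_right one_pos
  have hK : ∀ᶠ T in atTop, (∫ s in 0..S, g s) / T < a / 2 :=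
    (tendsto_const_nhds.div_atTop tendsto_id).eventually_lt_const (by positivity)
  filter_upwards [hC, hK, eventually_ge_atTop S] with T hCT hKT hST
  have hT : 0 < T := hS.trans_le hST
  have hsub : uIcc S T ⊆ uIcc 0 T := by
    rw [uIcc_of_le hST, uIcc_of_le hT.le]
    exact Icc_subset_Icc hS.le le_rfl
  have htail : ∫ s in S..T, g s ≤ ε * ∫ s in 0..T, h s := by
    have hS_nonneg : 0 ≤ ∫ s in 0..S, h s :=
      intervalIntegral.integral_nonneg hS.le fun s _ => hh s
    calc ∫ s in S..T, g s ≤ ∫ s in S..T, ε * h s :=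
          intervalIntegral.integral_mono_on hST ((hgi T hT).mono_set hsub)
            (((hhi T hT).mono_set hsub).const_mul ε) fun s hs => by
              simpa [Real.norm_of_nonneg (hg s), Real.norm_of_nonneg (hh s)] using
                hS₀ s ((le_max_left _ _).trans hs.1)
      _ = ε * ∫ s in S..T, h s := intervalIntegral.integral_const_mul _ _
      _ ≤ ε * ∫ s in 0..T, h s := by
          rw [← intervalIntegral.integral_add_adjacent_intervals (hhi S hS)
            ((hhi T hT).mono_set hsub)]
          gcongr
          linarith
  have hsplit : ∫ s in 0..T, g s = (∫ s in 0..S, g s) + ∫ s in S..T, g s :=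
    (intervalIntegral.integral_add_adjacent_intervals (hgi S hS) ((hgi T hT).mono_set hsub)).symm
  calc (1 / T) * ∫ s in 0..T, g s
      ≤ (∫ s in 0..S, g s) / T + ε * ((1 / T) * ∫ s in 0..T, h s) := by
        rw [hsplit, mul_add, one_div_mul_eq_div, mul_left_comm]
        gcongr
    _ < a / 2 + ε * max C 1 :=
        add_lt_add_of_lt_of_le hKT (mul_le_mul_of_nonneg_left (hCT.trans (le_max_left _ _)) hε.le)
    _ = a := by
        simp only [ε]
        field_simp
        ring

theorem stmt_11_general {n : ℕ} (β ρ : ℝ) (hρ : 0 < ρ)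
    (A : EuclideanSpace ℝ (Fin n) →L[ℝ] EuclideanSpace ℝ (Fin n))
    (hA : ∀ t : ℝ, 0 ≤ t → ‖NormedSpace.exp (t • A)‖ ≤ β * Real.exp (-ρ * t))
    (B : ℝ → (EuclideanSpace ℝ (Fin n) →L[ℝ] EuclideanSpace ℝ (Fin n)))
    (hBmeas : StronglyMeasurable B)
    (hBbdd : ∃ C : ℝ, ∀ t : ℝ, 0 ≤ t → ‖B t‖ ≤ C)
    (hBconv : Tendsto B atTop (nhds 0))
    (y : ℝ → EuclideanSpace ℝ (Fin n))
    (hymeas : StronglyMeasurable y)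
    (hyloc : ∀ T : ℝ, 0 < T → IntervalIntegrable (fun s => ‖y s‖ ^ 2) volume 0 T)
    (hybdd : ∃ C : ℝ, ∀ᶠ T in atTop, (1 / T) * ∫ s in (0:ℝ)..T, ‖y s‖ ^ 2 ≤ C) :
    Tendsto (fun T : ℝ =>
        (1 / T) * ∫ t in (0:ℝ)..T,
          ‖∫ s in (0:ℝ)..t, (NormedSpace.exp ((t - s) • A)) (B s (y s))‖ ^ 2)
      atTop (nhds 0) := by
  obtain ⟨C, hC⟩ := hBbdd
  set m : ℝ → ℝ := fun s => ‖B s‖ * ‖y s‖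
  have hm : Measurable m := hBmeas.norm.measurable.mul hymeas.norm.measurable
  have hm_int : ∀ T, 0 < T → IntervalIntegrable (fun s => m s ^ 2) volume 0 T := fun T hT =>
    ((hyloc T hT).const_mul (C ^ 2)).mono_fun' (hm.pow_const 2).aestronglyMeasurable <|
      (ae_restrict_iff' measurableSet_uIoc).2 <| ae_of_all _ fun s hs => by
        rw [uIoc_of_le hT.le] at hs
        show ‖(‖B s‖ * ‖y s‖) ^ 2‖ ≤ C ^ 2 * ‖y s‖ ^ 2
        rw [Real.norm_of_nonneg (sq_nonneg _), mul_pow]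
        gcongr
        exact hC s hs.1.le
  have hmo : (fun s => m s ^ 2) =o[atTop] fun s => ‖y s‖ ^ 2 := by
    have hB : Tendsto (fun s => ‖B s‖ ^ 2) atTop (𝓝 0) := by simpa using hBconv.norm.pow 2
    simpa [m, mul_pow] using
      ((isLittleO_one_iff ℝ).2 hB).mul_isBigO (isBigO_refl (fun s => ‖y s‖ ^ 2) atTop)
  have hz : ∀ T, 0 < T → ∫ t in (0:ℝ)..T,
      ‖∫ s in (0:ℝ)..t, (NormedSpace.exp ((t - s) • A)) (B s (y s))‖ ^ 2
        ≤ (β / ρ) ^ 2 * ∫ s in 0..T, m s ^ 2 := fun T hT =>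
    integral_sq_norm_volterra_le (Φ := fun u => NormedSpace.exp (u • A)) hρ hA hm
      (fun s => (B s).le_opNorm (y s)) hT.le (hm_int T hT).1
  have havg := tendsto_average_zero_of_isLittleO (fun s => sq_nonneg _) (fun s => sq_nonneg _)
    hm_int hyloc hmo hybdd
  refine tendsto_of_tendsto_of_tendsto_of_le_of_le' tendsto_const_nhds
    (by simpa only [mul_zero] using havg.const_mul ((β / ρ) ^ 2)) ?_ ?_
  · filter_upwards [eventually_ge_atTop 0] with T hT
    exact mul_nonneg (by positivity) (intervalIntegral.integral_nonneg hT fun t _ => sq_nonneg _)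
  · filter_upwards [eventually_gt_atTop 0] with T hT
    calc _ ≤ (1 / T) * ((β / ρ) ^ 2 * ∫ s in 0..T, m s ^ 2) :=
          mul_le_mul_of_nonneg_left (hz T hT) (by positivity)
      _ = (β / ρ) ^ 2 * ((1 / T) * ∫ s in 0..T, m s ^ 2) := mul_left_comm _ _ _

/-- If `A` is exponentially stable, `B(t)` is bounded and tends to `0`, and `y`
has finite long-run-average square norm, then the convolution
`z(t) = ∫_0^t exp((t−s)A) B(s) y(s) ds` satisfies
`(1/T) ∫_0^T ‖z(t)‖² dt → 0` as `T → ∞`. -/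
theorem stmt_11 {n : ℕ} (β ρ : ℝ) (hβ : 0 < β) (hρ : 0 < ρ)
    (A : EuclideanSpace ℝ (Fin n) →L[ℝ] EuclideanSpace ℝ (Fin n))
    (hA : ∀ t : ℝ, 0 ≤ t → ‖NormedSpace.exp (t • A)‖ ≤ β * Real.exp (-ρ * t))
    (B : ℝ → (EuclideanSpace ℝ (Fin n) →L[ℝ] EuclideanSpace ℝ (Fin n)))
    (hBmeas : StronglyMeasurable B)
    (hBbdd : ∃ C : ℝ, ∀ t : ℝ, 0 ≤ t → ‖B t‖ ≤ C)
    (hBconv : Tendsto B atTop (nhds 0))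
    (y : ℝ → EuclideanSpace ℝ (Fin n))
    (hymeas : StronglyMeasurable y)
    (hyloc : ∀ T : ℝ, 0 < T → IntervalIntegrable (fun s => ‖y s‖ ^ 2) volume 0 T)
    (hybdd : ∃ C : ℝ, ∀ᶠ T in atTop, (1 / T) * ∫ s in (0:ℝ)..T, ‖y s‖ ^ 2 ≤ C) :
    Tendsto (fun T : ℝ =>
        (1 / T) * ∫ t in (0:ℝ)..T,
          ‖∫ s in (0:ℝ)..t, (NormedSpace.exp ((t - s) • A)) (B s (y s))‖ ^ 2)
      atTop (nhds 0) :=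
  stmt_11_general β ρ hρ A hA B hBmeas hBbdd hBconv y hymeas hyloc hybdd
end
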